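/- arXiv:1009.1266 — 3 statements merged into one kernel-verified Lean document; each statement's English description precedes it below -/
import Mathlib

section
/- Let X be a Banach space, T > 0, A > 0, φ, ψ ∈ X, and let w, v, g : [0, T) → X be continuous functions such that ‖g(τ)‖ ≤ A·‖w(τ)‖ for all τ ∈ [0, T), and such that for all t ∈ [0, T): w(t) = φ + t·ψ + ∫₀ᵗ (t − τ)·g(τ) dτ and v(t) = ψ + ∫₀ᵗ g(τ) dτ. Then for all t ∈ [0, T): ‖w(t)‖ + ‖v(t)‖ ≤ (‖φ‖ + (1 + T)·‖ψ‖) · e^{(1+T)·A·T}. -/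
/-!
Since `0 ≤ s - τ ≤ T` for `0 ≤ τ ≤ s ≤ t < T`, the two integral equations give
`‖w s‖ ≤ ‖φ‖ + T‖ψ‖ + T A ∫₀ˢ ‖w‖` and `‖v s‖ ≤ ‖ψ‖ + A ∫₀ˢ ‖w‖`. So `‖w s‖` and `‖w s‖ + ‖v s‖`
are at most `B + C ∫₀ˢ ‖w‖` with `B = ‖φ‖ + (1 + T)‖ψ‖` and `C = (1 + T) A`, and Grönwall's
inequality in integral form, obtained from the differential form for the primitive
`s ↦ ∫₀ˢ ‖w‖`, bounds `B + C ∫₀ᵗ ‖w‖` by `B e^{C t} ≤ B e^{C T}`.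
-/

open Set MeasureTheory intervalIntegral

theorem add_mul_gronwallBound_zero (K B x : ℝ) :
    B + K * gronwallBound 0 K B x = B * Real.exp (K * x) := by
  rcases eq_or_ne K 0 with rfl | hK
  · simp [gronwallBound_K0]
  · rw [gronwallBound_of_K_ne_0 hK]
    field_simp
    ring

theorem hasDerivWithinAt_integral_of_continuousOn_Icc {E : Type*} [NormedAddCommGroup E]
    [NormedSpace ℝ E] [CompleteSpace E] {u : ℝ → E} {a b x : ℝ}
    (hu : ContinuousOn u (Icc a b)) (hx : x ∈ Icc a b) :
    HasDerivWithinAt (fun s => ∫ τ in a..s, u τ) (u x) (Icc a b) x :=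
  have : Fact (x ∈ Icc a b) := ⟨hx⟩
  integral_hasDerivWithinAt_right
    ((hu.mono (Icc_subset_Icc_right hx.2)).intervalIntegrable_of_Icc hx.1)
    (hu.stronglyMeasurableAtFilter_nhdsWithin measurableSet_Icc x) (hu x hx)

theorem add_mul_integral_le_mul_exp_of_le_add_mul_integral {u : ℝ → ℝ} {B C a b : ℝ}
    (hu : ContinuousOn u (Icc a b)) (hC : 0 ≤ C)
    (hle : ∀ s ∈ Icc a b, u s ≤ B + C * ∫ τ in a..s, u τ) :
    ∀ s ∈ Icc a b, B + C * ∫ τ in a..s, u τ ≤ B * Real.exp (C * (s - a)) := by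
  intro s hs
  have hderiv (x) (hx : x ∈ Icc a b) := hasDerivWithinAt_integral_of_continuousOn_Icc hu hx
  have hright (x) (hx : x ∈ Ico a b) :
      HasDerivWithinAt (fun s => ∫ τ in a..s, u τ) (u x) (Ici x) x :=
    (hderiv x (Ico_subset_Icc_self hx)).mono_of_mem_nhdsWithin (Icc_mem_nhdsGE_of_mem hx)
  have hgron := le_gronwallBound_of_liminf_deriv_right_le (δ := 0) (K := C) (ε := B)
    (fun x hx => (hderiv x hx).continuousWithinAt)
    (fun x hx _ hr => (hright x hx).liminf_right_slope_le hr) integral_same.le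
    (fun x hx => (hle x (Ico_subset_Icc_self hx)).trans_eq (add_comm _ _)) s hs
  calc B + C * ∫ τ in a..s, u τ ≤ B + C * gronwallBound 0 C B (s - a) := by gcongr
    _ = B * Real.exp (C * (s - a)) := add_mul_gronwallBound_zero C B (s - a)

theorem norm_integral_le_mul_integral_norm_of_norm_le_mul {E F : Type*} [NormedAddCommGroup E]
    [NormedSpace ℝ E] [NormedAddCommGroup F] {f : ℝ → E} {h : ℝ → F} {K a b : ℝ} (hab : a ≤ b)
    (hh : IntervalIntegrable (fun τ => ‖h τ‖) volume a b)
    (hle : ∀ τ ∈ Icc a b, ‖f τ‖ ≤ K * ‖h τ‖) :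
    ‖∫ τ in a..b, f τ‖ ≤ K * ∫ τ in a..b, ‖h τ‖ := by
  rw [← intervalIntegral.integral_const_mul]
  exact norm_integral_le_of_norm_le hab
    (Filter.Eventually.of_forall fun τ hτ => hle τ (Ioc_subset_Icc_self hτ)) (hh.const_mul K)

theorem norm_add_smul_add_integral_sub_smul_le {X : Type*} [NormedAddCommGroup X]
    [NormedSpace ℝ X] {φ ψ : X} {g w : ℝ → X} {A T s : ℝ} (hs : 0 ≤ s) (hsT : s ≤ T)
    (hw : IntervalIntegrable (fun τ => ‖w τ‖) volume 0 s)
    (hg : ∀ τ ∈ Icc 0 s, ‖g τ‖ ≤ A * ‖w τ‖) :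
    ‖φ + s • ψ + ∫ τ in (0 : ℝ)..s, (s - τ) • g τ‖ ≤
      ‖φ‖ + T * ‖ψ‖ + T * A * ∫ τ in (0 : ℝ)..s, ‖w τ‖ := by
  have hψ : ‖s • ψ‖ ≤ T * ‖ψ‖ := by
    rw [norm_smul, Real.norm_of_nonneg hs]
    gcongr
  have hint : ‖∫ τ in (0 : ℝ)..s, (s - τ) • g τ‖ ≤ T * A * ∫ τ in (0 : ℝ)..s, ‖w τ‖ := by
    refine norm_integral_le_mul_integral_norm_of_norm_le_mul hs hw fun τ hτ => ?_
    rw [norm_smul, Real.norm_of_nonneg (sub_nonneg.2 hτ.2), mul_assoc]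
    have hT : 0 ≤ T := hs.trans hsT
    calc (s - τ) * ‖g τ‖ ≤ T * ‖g τ‖ := by gcongr; linarith [hτ.1]
      _ ≤ T * (A * ‖w τ‖) := by gcongr; exact hg τ hτ
  calc _ ≤ ‖φ‖ + ‖s • ψ‖ + ‖∫ τ in (0 : ℝ)..s, (s - τ) • g τ‖ := norm_add₃_le
    _ ≤ _ := by gcongr

theorem gronwall_integral_estimate_general {X : Type*} [NormedAddCommGroup X] [NormedSpace ℝ X]
    (T A : ℝ) (hA : 0 < A) (φ ψ : X) (w v g : ℝ → X)
    (hw : ContinuousOn w (Ico 0 T))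
    (hbound : ∀ τ ∈ Ico 0 T, ‖g τ‖ ≤ A * ‖w τ‖)
    (hweq : ∀ t ∈ Ico 0 T, w t = φ + t • ψ + ∫ τ in (0 : ℝ)..t, (t - τ) • g τ)
    (hveq : ∀ t ∈ Ico 0 T, v t = ψ + ∫ τ in (0 : ℝ)..t, g τ) :
    ∀ t ∈ Ico 0 T,
      ‖w t‖ + ‖v t‖ ≤ (‖φ‖ + (1 + T) * ‖ψ‖) * Real.exp ((1 + T) * A * T) := by
  rintro t ⟨ht0, htT⟩
  have hT : 0 ≤ T := ht0.trans htT.le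
  have ht : t ∈ Icc 0 t := right_mem_Icc.2 ht0
  have hsub : Icc 0 t ⊆ Ico 0 T := Icc_subset_Ico_right htT
  have hwc : ContinuousOn (fun s => ‖w s‖) (Icc 0 t) := (hw.mono hsub).norm
  have hint (s) (hs : s ∈ Icc 0 t) : IntervalIntegrable (fun τ => ‖w τ‖) volume 0 s :=
    (hwc.mono (Icc_subset_Icc_right hs.2)).intervalIntegrable_of_Icc hs.1
  have hI (s) (hs : s ∈ Icc 0 t) : 0 ≤ ∫ τ in (0 : ℝ)..s, ‖w τ‖ :=
    integral_nonneg hs.1 fun τ _ => norm_nonneg _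
  have hw_le (s) (hs : s ∈ Icc 0 t) :
      ‖w s‖ ≤ ‖φ‖ + T * ‖ψ‖ + T * A * ∫ τ in (0 : ℝ)..s, ‖w τ‖ := by
    rw [hweq s (hsub hs)]
    exact norm_add_smul_add_integral_sub_smul_le hs.1 (hs.2.trans htT.le) (hint s hs)
      fun τ hτ => hbound τ (hsub ⟨hτ.1, hτ.2.trans hs.2⟩)
  have hv_le : ‖v t‖ ≤ ‖ψ‖ + A * ∫ τ in (0 : ℝ)..t, ‖w τ‖ := by
    rw [hveq t (hsub ht)]
    exact (norm_add_le _ _).trans (add_le_add le_rfl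
      (norm_integral_le_mul_integral_norm_of_norm_le_mul ht0 (hint t ht)
        fun τ hτ => hbound τ (hsub hτ)))
  have hgron := add_mul_integral_le_mul_exp_of_le_add_mul_integral hwc
    (B := ‖φ‖ + (1 + T) * ‖ψ‖) (by positivity : 0 ≤ (1 + T) * A)
    (fun s hs => by nlinarith [hw_le s hs, hI s hs, norm_nonneg ψ]) t ht
  have hB : 0 ≤ ‖φ‖ + (1 + T) * ‖ψ‖ := by positivity
  calc ‖w t‖ + ‖v t‖
      ≤ ‖φ‖ + (1 + T) * ‖ψ‖ + (1 + T) * A * ∫ τ in (0 : ℝ)..t, ‖w τ‖ := by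
        linarith [hw_le t ht]
    _ ≤ (‖φ‖ + (1 + T) * ‖ψ‖) * Real.exp ((1 + T) * A * (t - 0)) := hgron
    _ ≤ (‖φ‖ + (1 + T) * ‖ψ‖) * Real.exp ((1 + T) * A * T) := by gcongr; linarith

/-- **Gronwall estimate for the integral equations of `w_tt = Kw`** (Lemma 3.9): if
`‖g(τ)‖ ≤ A‖w(τ)‖` and `w(t) = φ + tψ + ∫₀ᵗ (t-τ) g(τ) dτ`, `v(t) = ψ + ∫₀ᵗ g(τ) dτ`
on `[0,T)`, then `‖w(t)‖ + ‖v(t)‖ ≤ (‖φ‖ + (1+T)‖ψ‖) e^{(1+T)AT}` on `[0,T)`. -/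
theorem gronwall_integral_estimate {X : Type*} [NormedAddCommGroup X] [NormedSpace ℝ X]
    [CompleteSpace X] (T A : ℝ) (hT : 0 < T) (hA : 0 < A) (φ ψ : X) (w v g : ℝ → X)
    (hw : ContinuousOn w (Ico 0 T)) (hv : ContinuousOn v (Ico 0 T))
    (hg : ContinuousOn g (Ico 0 T))
    (hbound : ∀ τ ∈ Ico 0 T, ‖g τ‖ ≤ A * ‖w τ‖)
    (hweq : ∀ t ∈ Ico 0 T, w t = φ + t • ψ + ∫ τ in (0 : ℝ)..t, (t - τ) • g τ)
    (hveq : ∀ t ∈ Ico 0 T, v t = ψ + ∫ τ in (0 : ℝ)..t, g τ) :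
    ∀ t ∈ Ico 0 T,
      ‖w t‖ + ‖v t‖ ≤ (‖φ‖ + (1 + T) * ‖ψ‖) * Real.exp ((1 + T) * A * T) :=
  gronwall_integral_estimate_general T A hA φ ψ w v g hw hbound hweq hveq
end

section
/- Let H be a real Hilbert space, ν > 0, and E₀ < 0. Then there is no twice continuously differentiable function v : [0, ∞) → H satisfying ⟨v''(t), v(t)⟩ ≥ (1 + 2ν)·(‖v'(t)‖² − 2E₀) for all t ≥ 0. -/
/-!
Levine's concavity argument. For `g t = ‖v t‖²` one has `g'' = 2 (‖v'‖² + ⟪v, v''⟫)`, so the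
hypothesis gives `g'' ≥ 4 (1 + ν) ‖v'‖² + c` with `c = -4 (1 + 2ν) E₀ > 0`, and Cauchy–Schwarz
turns this into `g g'' ≥ (1 + ν) g'²`, i.e. `g^{-ν}` is concave. Since `g'' ≥ c`, both `g'` and `g`
eventually become positive; from then on `-g / g'` is negative but has derivative
`(g g'' - g'²) / g'² ≥ ν`, which is impossible on an unbounded interval.
-/

open Set Filter
open scoped RealInnerProductSpace

theorem tendsto_atTop_of_eventually_le_deriv {f f' : ℝ → ℝ} {c : ℝ} (hc : 0 < c)
    (hf : ∀ᶠ t in atTop, HasDerivAt f (f' t) t) (hf' : ∀ᶠ t in atTop, c ≤ f' t) :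
    Tendsto f atTop atTop := by
  obtain ⟨a, ha⟩ := eventually_atTop.1 (hf.and hf')
  have hgrowth : ∀ t ∈ Ici a, c * (t - a) ≤ f t - f a := by
    refine fun t ht => (convex_Ici a).mul_sub_le_image_sub_of_le_deriv
      (fun s hs => (ha s hs).1.continuousAt.continuousWithinAt) (fun s hs => ?_) (fun s hs => ?_)
      a self_mem_Ici t ht ht
    all_goals rw [interior_Ici] at hs
    · exact (ha s hs.le).1.differentiableAt.differentiableWithinAt
    · exact (ha s hs.le).1.deriv ▸ (ha s hs.le).2
  refine tendsto_atTop_mono' atTop ((eventually_ge_atTop a).mono fun t ht => ?_)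
    (tendsto_atTop_add_const_left atTop (f a)
      ((tendsto_atTop_add_const_right atTop (-a) tendsto_id).const_mul_atTop hc))
  have := hgrowth t ht
  simp only [id, ← sub_eq_add_neg]
  linarith

theorem false_of_levine_inequality {g G G₂ : ℝ → ℝ} {ν c : ℝ} (hν : 0 < ν) (hc : 0 < c)
    (hg : ∀ᶠ t in atTop, HasDerivAt g (G t) t) (hG : ∀ᶠ t in atTop, HasDerivAt G (G₂ t) t)
    (hG₂ : ∀ᶠ t in atTop, c ≤ G₂ t) (hgG₂ : ∀ᶠ t in atTop, (1 + ν) * G t ^ 2 ≤ g t * G₂ t) :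
    False := by
  have hG_top := tendsto_atTop_of_eventually_le_deriv hc hG hG₂
  have hg_top := tendsto_atTop_of_eventually_le_deriv one_pos hg (hG_top.eventually_ge_atTop 1)
  have hk : ∀ᶠ t in atTop,
      HasDerivAt (fun t => -(g t / G t)) (-((G t * G t - g t * G₂ t) / G t ^ 2)) t ∧
        ν ≤ -((G t * G t - g t * G₂ t) / G t ^ 2) := by
    filter_upwards [hg, hG, hgG₂, hG_top.eventually_gt_atTop 0] with t hgt hGt hgGt hGpos
    refine ⟨(hgt.div hGt hGpos.ne').neg, ?_⟩
    rw [← neg_div, le_div_iff₀ (by positivity)]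
    linarith
  have hk_top := tendsto_atTop_of_eventually_le_deriv hν (hk.mono fun _ h => h.1)
    (hk.mono fun _ h => h.2)
  obtain ⟨t, hkt, hgt, hGt⟩ := ((hk_top.eventually_gt_atTop 0).and
    ((hg_top.eventually_gt_atTop 0).and (hG_top.eventually_gt_atTop 0))).exists
  have : 0 < g t / G t := div_pos hgt hGt
  linarith

theorem ContDiffOn.eventually_hasDerivAt_derivWithin_Ici {E : Type*} [NormedAddCommGroup E]
    [NormedSpace ℝ E] {f : ℝ → E} {a : ℝ} (hf : ContDiffOn ℝ 1 f (Ici a)) :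
    ∀ᶠ t in atTop, HasDerivAt f (derivWithin f (Ici a) t) t := by
  filter_upwards [eventually_gt_atTop a] with t ht
  exact ((hf.differentiableOn one_ne_zero) t ht.le).hasDerivWithinAt.hasDerivAt (Ici_mem_nhds ht)

theorem mul_sq_two_inner_le_norm_sq_mul {F : Type*} [NormedAddCommGroup F]
    [InnerProductSpace ℝ F] {x y : F} {κ b : ℝ} (hκ : 0 ≤ κ) (hb : 4 * κ * ‖y‖ ^ 2 ≤ b) :
    κ * (2 * ⟪x, y⟫) ^ 2 ≤ ‖x‖ ^ 2 * b := by
  have hCS : ⟪x, y⟫ ^ 2 ≤ ‖x‖ ^ 2 * ‖y‖ ^ 2 := by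
    rw [← mul_pow, ← sq_abs]
    exact pow_le_pow_left₀ (abs_nonneg _) (abs_real_inner_le_norm x y) 2
  calc κ * (2 * ⟪x, y⟫) ^ 2 ≤ ‖x‖ ^ 2 * (4 * κ * ‖y‖ ^ 2) := by nlinarith
    _ ≤ ‖x‖ ^ 2 * b := by gcongr

/-- **Abstract core of the blow-up theorem**: if `ν > 0` and `E₀ < 0`, there is no twice
continuously differentiable `v : [0,∞) → H` with
`⟨v''(t), v(t)⟩ ≥ (1+2ν)(‖v'(t)‖² - 2E₀)` for all `t ≥ 0`. -/
theorem no_global_solution {H : Type*} [NormedAddCommGroup H] [InnerProductSpace ℝ H]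
    (ν E₀ : ℝ) (hν : 0 < ν) (hE₀ : E₀ < 0) :
    ¬ ∃ v : ℝ → H, ContDiffOn ℝ 2 v (Ici 0) ∧
      ∀ t ∈ Ici (0 : ℝ),
        (1 + 2 * ν) * (‖derivWithin v (Ici 0) t‖ ^ 2 - 2 * E₀) ≤
          ⟪derivWithin (derivWithin v (Ici 0)) (Ici 0) t, v t⟫ := by
  rintro ⟨v, hv, hineq⟩
  set v' := derivWithin v (Ici 0)
  set v'' := derivWithin v' (Ici 0)
  have hv' := (hv.of_le one_le_two).eventually_hasDerivAt_derivWithin_Ici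
  have hv'' := (hv.derivWithin (uniqueDiffOn_Ici 0) le_rfl).eventually_hasDerivAt_derivWithin_Ici
  have hG₂ : ∀ᶠ t in atTop, 4 * (1 + ν) * ‖v' t‖ ^ 2 - 4 * (1 + 2 * ν) * E₀ ≤
      2 * (⟪v t, v'' t⟫ + ‖v' t‖ ^ 2) := by
    filter_upwards [eventually_ge_atTop 0] with t ht
    linarith [real_inner_comm (v t) (v'' t) ▸ hineq t ht]
  refine false_of_levine_inequality (g := fun t => ‖v t‖ ^ 2) (G := fun t => 2 * ⟪v t, v' t⟫)
    (G₂ := fun t => 2 * (⟪v t, v'' t⟫ + ‖v' t‖ ^ 2)) (c := -4 * (1 + 2 * ν) * E₀) hν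
    (by nlinarith) (hv'.mono fun t h => h.norm_sq) ?_ ?_ ?_
  · filter_upwards [hv', hv''] with t h h'
    simpa only [real_inner_self_eq_norm_sq] using (h.inner ℝ h').const_mul 2
  · filter_upwards [hG₂] with t ht
    nlinarith [sq_nonneg ‖v' t‖]
  · filter_upwards [hG₂] with t ht
    exact mul_sq_two_inner_le_norm_sq_mul (by linarith) (by nlinarith)
end

section
/- Let H be a real Hilbert space, ν > 0, E₀ ∈ ℝ, and let b, t₀ be real numbers with 0 < b ≤ −2E₀ and t₀ ≥ 0. Let v : I → H be twice continuously differentiable on an interval I ⊆ [0, ∞) with ⟨v''(t), v(t)⟩ ≥ (1 + 2ν)·(‖v'(t)‖² − 2E₀) for all t ∈ I, and define ℋ(t) = ‖v(t)‖² + b·(t + t₀)². Then ℋ''(t)·ℋ(t) − (1 + ν)·(ℋ'(t))² ≥ 0 for all t ∈ I. -/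
open Set
open scoped RealInnerProductSpace

/-!
With `x = ‖v'‖`, the hypothesis on `⟨v'', v⟩` and `-2E₀ ≥ b` give `ℋ'' ≥ 4(1+ν)(x² + b)`, while
`ℋ' = 2(⟨v', v⟩ + b(t+t₀))` is bounded by Cauchy–Schwarz in `H × ℝ` (weight `b` on `ℝ`), applied to
`(v', 1)` and `(v, t+t₀)`: `(ℋ')² ≤ 4(x² + b)ℋ`. Multiplying the first bound by `ℋ ≥ 0` concludes.
-/

theorem inner_add_mul_sq_le {H : Type*} [NormedAddCommGroup H] [InnerProductSpace ℝ H]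
    (u w : H) {b : ℝ} (hb : 0 ≤ b) (s : ℝ) :
    (⟪u, w⟫ + b * s) ^ 2 ≤ (‖u‖ ^ 2 + b) * (‖w‖ ^ 2 + b * s ^ 2) := by
  have key := real_inner_mul_inner_self_le (WithLp.toLp 2 (u, √b)) (WithLp.toLp 2 (w, √b * s))
  simp only [WithLp.prod_inner_apply, real_inner_self_eq_norm_sq, RCLike.inner_apply,
    conj_trivial] at key
  have hsqrt : √b * √b = b := Real.mul_self_sqrt hb
  rwa [mul_right_comm, mul_mul_mul_comm, hsqrt, ← sq, ← sq] at key

theorem concavity_inequality_general {H : Type*} [NormedAddCommGroup H] [InnerProductSpace ℝ H]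
    (ν E₀ b t₀ : ℝ) (hν : 0 < ν) (hb : 0 < b) (hbE : b ≤ -2 * E₀)
    (I : Set ℝ)
    (v v' v'' : ℝ → H)
    (hineq : ∀ t ∈ I, (1 + 2 * ν) * (‖v' t‖ ^ 2 - 2 * E₀) ≤ ⟪v'' t, v t⟫) :
    ∀ t ∈ I,
      0 ≤ (2 * ‖v' t‖ ^ 2 + 2 * ⟪v'' t, v t⟫ + 2 * b) * (‖v t‖ ^ 2 + b * (t + t₀) ^ 2)
          - (1 + ν) * (2 * ⟪v' t, v t⟫ + 2 * b * (t + t₀)) ^ 2 := by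
  intro t ht
  have hgap : 0 ≤ (1 + 2 * ν) * (-2 * E₀ - b) := by
    apply mul_nonneg <;> linarith
  have hH'' : 4 * (1 + ν) * (‖v' t‖ ^ 2 + b) ≤ 2 * ‖v' t‖ ^ 2 + 2 * ⟪v'' t, v t⟫ + 2 * b := by
    linear_combination 2 * hineq t ht + 2 * hgap
  have hH : 0 ≤ ‖v t‖ ^ 2 + b * (t + t₀) ^ 2 := by positivity
  rw [sub_nonneg]
  calc (1 + ν) * (2 * ⟪v' t, v t⟫ + 2 * b * (t + t₀)) ^ 2
      = 4 * (1 + ν) * (⟪v' t, v t⟫ + b * (t + t₀)) ^ 2 := by ring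
    _ ≤ 4 * (1 + ν) * ((‖v' t‖ ^ 2 + b) * (‖v t‖ ^ 2 + b * (t + t₀) ^ 2)) := by
      gcongr
      exact inner_add_mul_sq_le (v' t) (v t) hb.le (t + t₀)
    _ = 4 * (1 + ν) * (‖v' t‖ ^ 2 + b) * (‖v t‖ ^ 2 + b * (t + t₀) ^ 2) := by ring
    _ ≤ _ := by gcongr

/-- **Concavity computation of Theorem 5.2**: for a twice continuously differentiable
`v : I → H` (interval `I ⊆ [0,∞)`) satisfying `⟨v'', v⟩ ≥ (1+2ν)(‖v'‖² - 2E₀)`, and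
`0 < b ≤ -2E₀`, `t₀ ≥ 0`, the function `ℋ(t) = ‖v(t)‖² + b(t+t₀)²` (with
`ℋ' = 2⟨v', v⟩ + 2b(t+t₀)` and `ℋ'' = 2‖v'‖² + 2⟨v'', v⟩ + 2b`) satisfies
`ℋ'' ℋ - (1+ν)(ℋ')² ≥ 0` on `I`. -/
theorem concavity_inequality {H : Type*} [NormedAddCommGroup H] [InnerProductSpace ℝ H]
    (ν E₀ b t₀ : ℝ) (hν : 0 < ν) (hb : 0 < b) (hbE : b ≤ -2 * E₀) (ht₀ : 0 ≤ t₀)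
    (I : Set ℝ) (hI : I ⊆ Ici 0) (hI' : I.OrdConnected)
    (v v' v'' : ℝ → H)
    (hv : ∀ t ∈ I, HasDerivAt v (v' t) t)
    (hv' : ∀ t ∈ I, HasDerivAt v' (v'' t) t)
    (hv'' : ContinuousOn v'' I)
    (hineq : ∀ t ∈ I, (1 + 2 * ν) * (‖v' t‖ ^ 2 - 2 * E₀) ≤ ⟪v'' t, v t⟫) :
    ∀ t ∈ I,
      0 ≤ (2 * ‖v' t‖ ^ 2 + 2 * ⟪v'' t, v t⟫ + 2 * b) * (‖v t‖ ^ 2 + b * (t + t₀) ^ 2)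
          - (1 + ν) * (2 * ⟪v' t, v t⟫ + 2 * b * (t + t₀)) ^ 2 :=
  concavity_inequality_general ν E₀ b t₀ hν hb hbE I v v' v'' hineq
end
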